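/- A binary relation ⪰ on a closed, mixture-closed set C of Anscombe–Aumann acts over a finite set A of prizes satisfies extended mixture cancellation and has closed graph if and only if it has a constructive subjective-expected-utility representation with a single utility function: there exist a finite nonempty state space S', a finite nonempty outcome space O', a map h : S' → S, a map g : S' × A → O', a function u : O' → ℝ, and a nonempty closed set P of probability distributions p : S' → [0,1] (with ∑_{s'∈S'} p(s') = 1) such that for all a, b ∈ C: a ⪰ b if and only if for every p ∈ P, ∑_{s'∈S'} p(s')·∑_{c∈A} a(h(s'))(c)·u(g(s', c)) ≥ ∑_{s'∈S'} p(s')·∑_{c∈A} b(h(s'))(c)·u(g(s', c)). Moreover, if ⪰ is in addition complete (for all a, b ∈ C, a ⪰ b or b ⪰ a), then P can be chosen to be a singleton. -/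

import Mathlib

/-- An Anscombe–Aumann act over prizes `A`: a map assigning to each state a probability
vector over prizes. -/
def IsAAAct {S A : Type*} [Fintype A] (a : S → A → ℝ) : Prop :=
  ∀ s, (∀ c, 0 ≤ a s c) ∧ (∑ c, a s c = 1)

/-- Extended mixture cancellation for a relation on a subset of a real vector space. -/
def ExtMixCancel {V : Type*} [AddCommGroup V] [Module ℝ V]
    (C : Set V) (R : V → V → Prop) : Prop :=
  ∀ (n : ℕ) (a b : Fin (n + 1) → V),
    (∀ i, a i ∈ C) → (∀ i, b i ∈ C) →
    (∑ i, a i = ∑ i, b i) →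
    (∃ k, k ≤ n ∧ (∀ i : Fin (n + 1), (i : ℕ) < k → R (a i) (b i)) ∧
      (∀ i : Fin (n + 1), k ≤ (i : ℕ) → a i = a (Fin.last n) ∧ b i = b (Fin.last n))) →
    R (b (Fin.last n)) (a (Fin.last n))

/-- The graph `{(a, b) ∈ C × C : a ⪰ b}` is closed. -/
def ClosedGraphOn {V : Type*} [TopologicalSpace V] (C : Set V) (R : V → V → Prop) : Prop :=
  IsClosed {p : V × V | p.1 ∈ C ∧ p.2 ∈ C ∧ R p.1 p.2}

/-!
Let `D = {a - b : a ⪰ b}`. Extended mixture cancellation makes `⪰` a relation between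
differences (`a ⪰ b` iff `a - b ∈ D`); with mixture-closedness and the closedness of `D` (it is
compact because `C` is) it makes `D` convex and closed under scaling by `[0, 1]`, so `a ⪰ b` as
soon as `a - b` lies in the cone spanned by `D`. Pushing `a - b` slightly towards a relative
interior point of `D` extends this to the closure of that cone, and Hahn–Banach then gives:
`a ⪰ b` iff `f (a - b) ≥ 0` for every linear `f` that is nonnegative on `D`.

Differences of AA acts sum to zero, so such an `f` may be shifted by a constant and normalised
into a probability vector on the subjective states `S' ≃ S × A`; the state `(s, c)` looks at the
true state `s` and pays utility `1` exactly when the prize is `c`. These vectors form the closed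
set of priors. Conversely, a representation is a family of linear inequalities, which gives
cancellation and a closed graph. If `⪰` is complete, a prior averaging a finite spanning subset
of the priors already represents it: a nonnegative functional vanishing there vanishes on all
priors.
-/

open Set Filter Topology

section Cancellation

variable {V : Type*} [AddCommGroup V] {C : Set V} {R : V → V → Prop} {a b d : V}

def relGraph (C : Set V) (R : V → V → Prop) : Set (V × V) :=
  {q | q.1 ∈ C ∧ q.2 ∈ C ∧ R q.1 q.2}

def relDiffs (C : Set V) (R : V → V → Prop) : Set V :=
  (fun q => q.1 - q.2) '' relGraph C R

theorem sub_mem_relDiffs (ha : a ∈ C) (hb : b ∈ C) (h : R a b) : a - b ∈ relDiffs C R :=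
  ⟨(a, b), ⟨ha, hb, h⟩, rfl⟩

theorem isCompact_relDiffs [TopologicalSpace V] [ContinuousSub V] (hC : IsCompact C)
    (hG : ClosedGraphOn C R) : IsCompact (relDiffs C R) :=
  ((hC.prod hC).of_isClosed_subset hG fun _ hq => ⟨hq.1, hq.2.1⟩).image
    (continuous_fst.sub continuous_snd)

variable [Module ℝ V]

namespace ExtMixCancel

theorem rel_refl (hE : ExtMixCancel C R) (ha : a ∈ C) : R a a :=
  hE 0 (fun _ => a) (fun _ => a) (fun _ => ha) (fun _ => ha) rfl
    ⟨0, le_rfl, fun _ h => absurd h (Nat.not_lt_zero _), fun _ _ => ⟨rfl, rfl⟩⟩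

theorem rel_of_sum_add_nsmul (hE : ExtMixCancel C R) {k m : ℕ} (u v : Fin k → V)
    (hu : ∀ i, u i ∈ C) (hv : ∀ i, v i ∈ C) (huv : ∀ i, R (u i) (v i)) (ha : a ∈ C) (hb : b ∈ C)
    (hsum : ∑ i, u i + (m + 1) • b = ∑ i, v i + (m + 1) • a) : R a b := by
  let pad (w : Fin k → V) (c : V) : Fin (k + (m + 1)) → V := Fin.append w fun _ => c
  have pad_tail (w : Fin k → V) (c : V) (i : Fin (k + (m + 1))) (hi : k ≤ (i : ℕ)) :
      pad w c i = c := by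
    rw [← Fin.natAdd_subNat_cast hi]
    exact Fin.append_right _ _ _
  have pad_mem (w : Fin k → V) (c : V) (hw : ∀ i, w i ∈ C) (hc : c ∈ C) (i) : pad w c i ∈ C :=
    Fin.addCases (fun j => by simpa [pad] using hw j) (fun j => by simpa [pad] using hc) i
  have pad_sum (w : Fin k → V) (c : V) : ∑ i, pad w c i = ∑ i, w i + (m + 1) • c := by
    simp [pad, Fin.sum_univ_add]
  have pad_init (w : Fin k → V) (c : V) (i : Fin (k + (m + 1))) (hi : (i : ℕ) < k) :
      pad w c i = w ⟨i, hi⟩ :=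
    Fin.append_left _ _ (⟨i, hi⟩ : Fin k)
  have hlast : k ≤ ((Fin.last (k + m) : Fin (k + (m + 1))) : ℕ) := by simp
  have key := hE (k + m) (pad u b) (pad v a) (pad_mem u b hu hb) (pad_mem v a hv ha)
    ((pad_sum u b).trans (hsum.trans (pad_sum v a).symm))
    ⟨k, by omega, fun i hi => by rw [pad_init _ _ i hi, pad_init _ _ i hi]; exact huv _,
      fun i hi => by rw [pad_tail _ _ i hi, pad_tail _ _ _ hlast, pad_tail _ _ i hi,
        pad_tail _ _ _ hlast]; exact ⟨rfl, rfl⟩⟩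
  rwa [pad_tail _ _ _ hlast, pad_tail _ _ _ hlast] at key

theorem rel_of_sub_mem_relDiffs (hE : ExtMixCancel C R) (ha : a ∈ C) (hb : b ∈ C)
    (h : a - b ∈ relDiffs C R) : R a b := by
  obtain ⟨⟨x, y⟩, ⟨hx, hy, hxy⟩, hd⟩ := h
  refine hE.rel_of_sum_add_nsmul (k := 1) (m := 0) (fun _ => x) (fun _ => y) (fun _ => hx)
    (fun _ => hy) (fun _ => hxy) ha hb ?_
  simp only [Finset.univ_unique, Finset.sum_singleton, zero_add, one_smul]
  rw [add_comm y, ← sub_eq_sub_iff_add_eq_add]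
  exact hd

theorem zero_mem_relDiffs (hE : ExtMixCancel C R) (ha : a ∈ C) : (0 : V) ∈ relDiffs C R :=
  sub_self a ▸ sub_mem_relDiffs ha ha (hE.rel_refl ha)

-- With `r = p / (n + 1)`, `p` copies of `(x, y)` and `n + 1` copies of `y` balance `n + 1`
-- copies of `r • x + (1 - r) • y`.
theorem div_smul_mem_relDiffs (hE : ExtMixCancel C R) (hC : Convex ℝ C) (hd : d ∈ relDiffs C R)
    {p n : ℕ} (hpn : p ≤ n + 1) : ((p : ℝ) / (n + 1)) • d ∈ relDiffs C R := by
  obtain ⟨⟨x, y⟩, ⟨hx, hy, hxy⟩, rfl⟩ := hd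
  set r : ℝ := (p : ℝ) / (n + 1)
  have hr0 : 0 ≤ r := by positivity
  have hr : r * (n + 1) = p := div_mul_cancel₀ _ (by positivity)
  have hr1 : r ≤ 1 := div_le_one_of_le₀ (by exact_mod_cast hpn) (by positivity)
  have hmixC : r • x + (1 - r) • y ∈ C := hC hx hy hr0 (by linarith) (by ring)
  have hR : R (r • x + (1 - r) • y) y := by
    refine hE.rel_of_sum_add_nsmul (k := p) (m := n) (fun _ => x) (fun _ => y) (fun _ => hx)
      (fun _ => hy) (fun _ => hxy) hmixC hy ?_
    simp only [Finset.sum_const, Finset.card_univ, Fintype.card_fin, ← Nat.cast_smul_eq_nsmul ℝ]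
    push_cast
    match_scalars <;> linarith
  convert sub_mem_relDiffs hmixC hy hR using 1
  module

theorem smul_mem_relDiffs [TopologicalSpace V] [ContinuousSMul ℝ V] (hE : ExtMixCancel C R)
    (hC : Convex ℝ C) (hD : IsClosed (relDiffs C R)) (hd : d ∈ relDiffs C R) {t : ℝ}
    (ht0 : 0 ≤ t) (ht1 : t ≤ 1) : t • d ∈ relDiffs C R := by
  have hlim : Tendsto (fun j : ℕ => ((⌊t * j⌋₊ : ℝ) / j) • d) atTop (𝓝 (t • d)) :=
    ((tendsto_nat_floor_mul_div_atTop ht0).comp tendsto_natCast_atTop_atTop).smul_const d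
  refine hD.mem_of_tendsto hlim (eventually_atTop.2 ⟨1, fun j hj => ?_⟩)
  obtain ⟨n, rfl⟩ := Nat.exists_eq_add_of_le' hj
  have hfloor : ⌊t * (n + 1 : ℕ)⌋₊ ≤ n + 1 :=
    Nat.floor_le_of_le (by push_cast; nlinarith)
  simpa using hE.div_smul_mem_relDiffs hC hd hfloor

theorem convex_relDiffs [TopologicalSpace V] [ContinuousSMul ℝ V] (hE : ExtMixCancel C R)
    (hC : Convex ℝ C) (hD : IsClosed (relDiffs C R)) : Convex ℝ (relDiffs C R) := by
  rintro _ hd₁ _ hd₂ μ ν hμ hν hμν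
  obtain ⟨⟨u₁, v₁⟩, ⟨hu₁, hv₁, h₁⟩, e₁⟩ := hE.smul_mem_relDiffs hC hD hd₁ hμ (by linarith)
  obtain ⟨⟨u₂, v₂⟩, ⟨hu₂, hv₂, h₂⟩, e₂⟩ := hE.smul_mem_relDiffs hC hD hd₂ hν (by linarith)
  obtain ⟨⟨x₁, y₁⟩, ⟨hx₁, hy₁, -⟩, rfl⟩ := hd₁
  obtain ⟨⟨x₂, y₂⟩, ⟨hx₂, hy₂, -⟩, rfl⟩ := hd₂
  dsimp only at e₁ e₂ hx₁ hy₁ hx₂ hy₂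
  have hxC : μ • x₁ + ν • x₂ ∈ C := hC hx₁ hx₂ hμ hν hμν
  have hyC : μ • y₁ + ν • y₂ ∈ C := hC hy₁ hy₂ hμ hν hμν
  have hR : R (μ • x₁ + ν • x₂) (μ • y₁ + ν • y₂) := by
    refine hE.rel_of_sum_add_nsmul (k := 2) (m := 0) ![u₁, u₂] ![v₁, v₂]
      (fun i => by fin_cases i <;> assumption) (fun i => by fin_cases i <;> assumption)
      (fun i => by fin_cases i <;> assumption) hxC hyC ?_
    simp only [Fin.sum_univ_two, Matrix.cons_val_zero, Matrix.cons_val_one, zero_add, one_smul]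
    linear_combination (norm := module) e₁ + e₂
  convert sub_mem_relDiffs hxC hyC hR using 1
  module

theorem rel_of_sub_mem_hull [TopologicalSpace V] [ContinuousSMul ℝ V] (hE : ExtMixCancel C R)
    (hC : Convex ℝ C) (hD : IsClosed (relDiffs C R)) (ha : a ∈ C) (hb : b ∈ C)
    (h : a - b ∈ ConvexCone.hull ℝ (relDiffs C R)) : R a b := by
  obtain ⟨c, hc, d, hd, hcd⟩ := (ConvexCone.mem_hull_of_convex (hE.convex_relDiffs hC hD)).1 h
  have hk : (0 : ℝ) < ⌈c⌉₊ := Nat.cast_pos.2 (Nat.ceil_pos.2 hc)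
  obtain ⟨⟨u, v⟩, ⟨hu, hv, huv⟩, he⟩ := hE.smul_mem_relDiffs hC hD hd (t := c / ⌈c⌉₊)
    (by positivity) (div_le_one_of_le₀ (Nat.le_ceil c) hk.le)
  refine hE.rel_of_sum_add_nsmul (k := ⌈c⌉₊) (m := 0) (fun _ => u) (fun _ => v) (fun _ => hu)
    (fun _ => hv) (fun _ => huv) ha hb ?_
  dsimp only at he hcd
  have hk' : (⌈c⌉₊ : ℝ) • (u - v) = a - b := by
    rw [he, smul_smul, mul_div_cancel₀ _ hk.ne', hcd]
  simp only [Finset.sum_const, Finset.card_univ, Fintype.card_fin, zero_add,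
    ← Nat.cast_smul_eq_nsmul ℝ]
  linear_combination (norm := module) hk'

end ExtMixCancel
end Cancellation

section Duality

variable {V : Type*} [NormedAddCommGroup V] [NormedSpace ℝ V] [FiniteDimensional ℝ V]
  {C : Set V} {R : V → V → Prop} {a b : V}

-- `e` is an interior point of `D` relative to the span of `D`, which is also the span of the cone.
theorem Convex.exists_openSegment_subset_hull {D : Set V} (hD : Convex ℝ D) (h0 : (0 : V) ∈ D) :
    ∃ e ∈ D, ∀ x ∈ closure (ConvexCone.hull ℝ D : Set V),
      openSegment ℝ x e ⊆ ConvexCone.hull ℝ D := by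
  set W := Submodule.span ℝ D
  set K : Set V := ↑(ConvexCone.hull ℝ D)
  have hKW : K ⊆ W := by
    intro x hx
    obtain ⟨r, -, y, hy, rfl⟩ := (ConvexCone.mem_hull_of_convex hD).1 hx
    exact W.smul_mem r (Submodule.subset_span hy)
  have hD' : Convex ℝ ((↑) ⁻¹' D : Set W) := hD.linear_preimage W.subtype
  have hK' : Convex ℝ ((↑) ⁻¹' K : Set W) :=
    (ConvexCone.hull ℝ D).convex.linear_preimage W.subtype
  have hspan : affineSpan ℝ ((↑) ⁻¹' D : Set W) = ⊤ := by
    rw [AffineSubspace.affineSpan_eq_top_iff_vectorSpan_eq_top_of_nonempty ℝ W W ⟨0, h0⟩,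
      vectorSpan_eq_span_vsub_set_right ℝ (show (0 : W) ∈ (↑) ⁻¹' D from h0)]
    simp only [vsub_eq_sub, sub_zero, image_id']
    exact Submodule.span_span_coe_preimage
  obtain ⟨e, he⟩ := hD'.interior_nonempty_iff_affineSpan_eq_top.2 hspan
  refine ⟨e, (interior_subset he : e ∈ ((↑) ⁻¹' D : Set W)), fun x hx => ?_⟩
  have hxW : x ∈ W := closure_minimal hKW W.closed_of_finiteDimensional hx
  have hx' : (⟨x, hxW⟩ : W) ∈ closure ((↑) ⁻¹' K) := by
    rwa [closure_subtype, image_preimage_eq_of_subset (by rwa [Subtype.range_coe_subtype])]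
  have he' : e ∈ interior ((↑) ⁻¹' K : Set W) :=
    interior_mono (show ((↑) ⁻¹' D : Set W) ⊆ (↑) ⁻¹' K from
      fun _ hy => ConvexCone.subset_hull hy) he
  rintro _ ⟨μ, ν, hμ, hν, hμν, rfl⟩
  have := interior_subset (hK'.combo_closure_interior_subset_interior hμ.le hν hμν
    (add_mem_add (smul_mem_smul_set hx') (smul_mem_smul_set he')))
  exact this

namespace ExtMixCancel

theorem rel_of_sub_mem_closure_hull (hE : ExtMixCancel C R) (hC : Convex ℝ C)
    (hD : IsClosed (relDiffs C R)) (ha : a ∈ C) (hb : b ∈ C)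
    (h : a - b ∈ closure (ConvexCone.hull ℝ (relDiffs C R) : Set V)) : R a b := by
  obtain ⟨_, ⟨⟨u, v⟩, ⟨hu, hv, -⟩, rfl⟩, hseg⟩ :=
    (hE.convex_relDiffs hC hD).exists_openSegment_subset_hull (hE.zero_mem_relDiffs ha)
  have hsegD : openSegment ℝ (a - b) (u - v) ⊆ relDiffs C R := by
    rintro _ ⟨μ, ν, hμ, hν, hμν, rfl⟩
    have haC : μ • a + ν • u ∈ C := hC ha hu hμ.le hν.le hμν
    have hbC : μ • b + ν • v ∈ C := hC hb hv hμ.le hν.le hμν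
    have hR := hE.rel_of_sub_mem_hull hC hD haC hbC <| by
      rw [show μ • a + ν • u - (μ • b + ν • v) = μ • (a - b) + ν • (u - v) by module]
      exact hseg _ h ⟨μ, ν, hμ, hν, hμν, rfl⟩
    convert sub_mem_relDiffs haC hbC hR using 1
    module
  exact hE.rel_of_sub_mem_relDiffs ha hb (hD.closure_subset_iff.2 hsegD
    (segment_subset_closure_openSegment (left_mem_segment ℝ _ _)))

theorem rel_iff_forall_dual (hE : ExtMixCancel C R) (hC : Convex ℝ C)
    (hD : IsClosed (relDiffs C R)) (ha : a ∈ C) (hb : b ∈ C) :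
    R a b ↔ ∀ f : StrongDual ℝ V, (∀ d ∈ relDiffs C R, 0 ≤ f d) → 0 ≤ f (a - b) := by
  refine ⟨fun h f hf => hf _ (sub_mem_relDiffs ha hb h), fun h => ?_⟩
  by_contra hab
  set K := ConvexCone.hull ℝ (relDiffs C R)
  obtain ⟨f, u, hfx, hfK⟩ := geometric_hahn_banach_point_closed K.convex.closure isClosed_closure
    fun hx => hab (hE.rel_of_sub_mem_closure_hull hC hD ha hb hx)
  have hu : u < 0 := by
    simpa using hfK 0 (subset_closure (ConvexCone.subset_hull (hE.zero_mem_relDiffs ha)))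
  -- `f` is bounded below on the cone `K`, hence nonnegative on it.
  have hfD : ∀ d ∈ relDiffs C R, 0 ≤ f d := fun d hd => by
    by_contra! hneg
    have := hfK ((u / f d) • d)
      (subset_closure (K.smul_mem (div_pos_of_neg_of_neg hu hneg) (ConvexCone.subset_hull hd)))
    rw [map_smul, smul_eq_mul, div_mul_cancel₀ _ hneg.ne] at this
    exact lt_irrefl _ this
  linarith [h f hfD]

end ExtMixCancel

end Duality

section Encoding

variable {ι S A : Type*}

-- Adding the constant `1 + ∑ |w j|` to `w` makes it positive without changing `w ⬝ᵥ y`.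
theorem exists_mem_stdSimplex_dotProduct_eq [Fintype ι] [Nonempty ι] (w : ι → ℝ) :
    ∃ p ∈ stdSimplex ℝ ι, ∃ c > 0, ∀ y : ι → ℝ, ∑ i, y i = 0 → w ⬝ᵥ y = c * (p ⬝ᵥ y) := by
  set κ := 1 + ∑ j, |w j|
  set q : ι → ℝ := fun i => w i + κ
  have hq : ∀ i, 1 ≤ q i := fun i => by
    have := Finset.single_le_sum (fun j _ => abs_nonneg (w j)) (Finset.mem_univ i)
    have := neg_abs_le (w i)
    simp only [q, κ]
    linarith
  have hc : 0 < ∑ i, q i := Finset.sum_pos (fun i _ => by linarith [hq i]) Finset.univ_nonempty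
  refine ⟨(∑ i, q i)⁻¹ • q, ⟨fun i => ?_, ?_⟩, ∑ i, q i, hc, fun y hy => ?_⟩
  · exact mul_nonneg (inv_nonneg.2 hc.le) (by linarith [hq i])
  · simp only [Pi.smul_apply, smul_eq_mul, ← Finset.mul_sum, inv_mul_cancel₀ hc.ne']
  · rw [smul_dotProduct, smul_eq_mul, mul_inv_cancel_left₀ hc.ne']
    simp only [dotProduct, q, add_mul, Finset.sum_add_distrib, ← Finset.mul_sum, hy, mul_zero,
      add_zero]

def actCoords (e : ι ≃ S × A) : (S → A → ℝ) ≃ₗ[ℝ] (ι → ℝ) :=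
  (LinearEquiv.curry ℝ ℝ S A).symm ≪≫ₗ LinearEquiv.funCongrLeft ℝ ℝ e

theorem actCoords_apply (e : ι ≃ S × A) (x : S → A → ℝ) (i : ι) :
    actCoords e x i = x (e i).1 (e i).2 :=
  rfl

theorem exists_dotProduct_actCoords [Fintype ι] (e : ι ≃ S × A) (f : (S → A → ℝ) →ₗ[ℝ] ℝ) :
    ∃ w : ι → ℝ, ∀ x, f x = w ⬝ᵥ actCoords e x := by
  classical
  set ψ := f ∘ₗ (actCoords e).symm.toLinearMap
  refine ⟨(dotProductEquiv ℝ ι).symm ψ, fun x => ?_⟩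
  have := LinearMap.congr_fun ((dotProductEquiv ℝ ι).apply_symm_apply ψ) (actCoords e x)
  rw [dotProductEquiv_apply_apply] at this
  simp [this, ψ]

theorem IsAAAct.sum_actCoords_sub [Fintype ι] [Fintype S] [Fintype A] (e : ι ≃ S × A)
    {a b : S → A → ℝ} (ha : IsAAAct a) (hb : IsAAAct b) : ∑ i, actCoords e (a - b) i = 0 := by
  simp only [actCoords_apply]
  rw [e.sum_comp (fun q => (a - b) q.1 q.2), Fintype.sum_prod_type]
  simp [Finset.sum_sub_distrib, (ha _).2, (hb _).2]

def seuPairing [Fintype A] {S' O : Type*} [Fintype S'] (h : S' → S) (g : S' × A → O)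
    (u : O → ℝ) :
    (S' → ℝ) →ₗ[ℝ] (S → A → ℝ) →ₗ[ℝ] ℝ :=
  LinearMap.mk₂ ℝ (fun p x => ∑ s', p s' * ∑ c, x (h s') c * u (g (s', c)))
    (fun p p' x => by simp [add_mul, Finset.sum_add_distrib])
    (fun r p x => by simp [Finset.mul_sum, mul_assoc])
    (fun p x x' => by simp [add_mul, mul_add, Finset.sum_add_distrib])
    (fun r p x => by simp [Finset.mul_sum, mul_left_comm, mul_assoc])

def indicatorOutcome [DecidableEq A] (e : ι ≃ S × A) : ι × A → Fin 2 :=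
  fun q => if q.2 = (e q.1).2 then 1 else 0

theorem seuPairing_indicatorOutcome [Fintype ι] [Fintype A] [DecidableEq A] (e : ι ≃ S × A)
    (p : ι → ℝ) (x : S → A → ℝ) :
    seuPairing (fun i => (e i).1) (indicatorOutcome e) (fun o => ((o : ℕ) : ℝ)) p x =
      p ⬝ᵥ actCoords e x := by
  simp [seuPairing, indicatorOutcome, dotProduct, actCoords_apply, apply_ite]

def priors [Fintype ι] (e : ι ≃ S × A) (D : Set (S → A → ℝ)) : Set (ι → ℝ) :=
  stdSimplex ℝ ι ∩ ⋂ d ∈ D, {p | 0 ≤ p ⬝ᵥ actCoords e d}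

variable [Fintype ι] {e : ι ≃ S × A} {D : Set (S → A → ℝ)}

theorem isClosed_priors : IsClosed (priors e D) :=
  (isClosed_stdSimplex ℝ ι).inter <| isClosed_biInter fun _ _ =>
    isClosed_le continuous_const (continuous_id.dotProduct continuous_const)

theorem convex_priors : Convex ℝ (priors e D) :=
  (convex_stdSimplex ℝ ι).inter <| convex_iInter₂ fun _ _ =>
    convex_halfSpace_ge ⟨fun p q => add_dotProduct p q _, fun c p => smul_dotProduct c p _⟩ 0

theorem priors_nonempty [Nonempty ι] (hD : ∀ d ∈ D, ∑ i, actCoords e d i = 0) :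
    (priors e D).Nonempty := by
  obtain ⟨p, hp, c, hc, hzero⟩ := exists_mem_stdSimplex_dotProduct_eq (0 : ι → ℝ)
  refine ⟨p, hp, mem_iInter₂.2 fun d hd => ?_⟩
  have := hzero _ (hD d hd)
  rw [zero_dotProduct, zero_eq_mul] at this
  exact (this.resolve_left hc.ne').ge

end Encoding

theorem IsAAAct.le_one {S A : Type*} [Fintype A] {a : S → A → ℝ} (ha : IsAAAct a) (s : S) (c : A) :
    a s c ≤ 1 :=
  (ha s).2 ▸ Finset.single_le_sum (fun c' _ => (ha s).1 c') (Finset.mem_univ c)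

theorem isCompact_of_forall_isAAAct {S A : Type*} [Fintype A] {C : Set (S → A → ℝ)}
    (hAA : ∀ a ∈ C, IsAAAct a) (hC : IsClosed C) : IsCompact C :=
  (isCompact_univ_pi fun _ => isCompact_univ_pi fun _ => isCompact_Icc).of_isClosed_subset hC
    fun a ha => mem_univ_pi.2 fun s => mem_univ_pi.2 fun c =>
      ⟨(hAA a ha s).1 c, (hAA a ha).le_one s c⟩

theorem sum_actCoords_eq_zero_of_mem_relDiffs {ι S A : Type*} [Fintype ι] [Fintype S] [Fintype A]
    (e : ι ≃ S × A) {C : Set (S → A → ℝ)} {R : (S → A → ℝ) → (S → A → ℝ) → Prop}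
    (hAA : ∀ a ∈ C, IsAAAct a) : ∀ d ∈ relDiffs C R, ∑ i, actCoords e d i = 0 := by
  rintro _ ⟨⟨x, y⟩, ⟨hx, hy, -⟩, rfl⟩
  exact (hAA x hx).sum_actCoords_sub e (hAA y hy)

theorem ExtMixCancel.rel_iff_forall_priors {ι S A : Type*} [Fintype ι] [Nonempty ι] [Fintype S]
    [Fintype A] (e : ι ≃ S × A) {C : Set (S → A → ℝ)} {R : (S → A → ℝ) → (S → A → ℝ) → Prop}
    (hAA : ∀ a ∈ C, IsAAAct a) (hE : ExtMixCancel C R) (hC : Convex ℝ C)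
    (hD : IsClosed (relDiffs C R)) {a b : S → A → ℝ} (ha : a ∈ C) (hb : b ∈ C) :
    R a b ↔ ∀ p ∈ priors e (relDiffs C R), p ⬝ᵥ actCoords e b ≤ p ⬝ᵥ actCoords e a := by
  have hbal := sum_actCoords_eq_zero_of_mem_relDiffs e hAA (R := R)
  refine ⟨fun h p hp => ?_, fun h => (hE.rel_iff_forall_dual hC hD ha hb).2 fun f hf => ?_⟩
  · have : 0 ≤ p ⬝ᵥ actCoords e (a - b) := mem_iInter₂.1 hp.2 _ (sub_mem_relDiffs ha hb h)
    rwa [map_sub, dotProduct_sub, sub_nonneg] at this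
  · obtain ⟨w, hw⟩ := exists_dotProduct_actCoords e (f : (S → A → ℝ) →ₗ[ℝ] ℝ)
    obtain ⟨p, hp, c, hc, hwp⟩ := exists_mem_stdSimplex_dotProduct_eq w
    have hf' : ∀ d ∈ relDiffs C R, f d = c * (p ⬝ᵥ actCoords e d) := fun d hd =>
      (hw d).trans (hwp _ (hbal d hd))
    have hpD : p ∈ priors e (relDiffs C R) := ⟨hp, mem_iInter₂.2 fun d hd =>
      nonneg_of_mul_nonneg_right ((hf' d hd) ▸ hf d hd) hc⟩
    have hfab : f (a - b) = c * (p ⬝ᵥ actCoords e (a - b)) :=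
      (hw _).trans (hwp _ ((hAA a ha).sum_actCoords_sub e (hAA b hb)))
    rw [hfab, map_sub, dotProduct_sub]
    exact mul_nonneg hc.le (sub_nonneg.2 (h p hpD))

section Representation

variable {V ι : Type*} {C : Set V} {R : V → V → Prop}

theorem extMixCancel_of_forall_le [AddCommGroup V] [Module ℝ V] (P : Set ι) (F : ι → V →+ ℝ)
    (hR : ∀ a ∈ C, ∀ b ∈ C, R a b ↔ ∀ p ∈ P, F p b ≤ F p a) : ExtMixCancel C R := by
  rintro n a b ha hb hsum ⟨k, -, hinit, htail⟩
  refine (hR _ (hb _) _ (ha _)).2 fun p hp => ?_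
  by_contra! hlt
  have hterm : ∀ i, 0 ≤ F p (a i) - F p (b i) := fun i => by
    rcases lt_or_ge (i : ℕ) k with hi | hi
    · exact sub_nonneg.2 ((hR _ (ha i) _ (hb i)).1 (hinit i hi) p hp)
    · rw [(htail i hi).1, (htail i hi).2]
      exact (sub_pos.2 hlt).le
  have hpos : 0 < ∑ i, (F p (a i) - F p (b i)) :=
    Finset.sum_pos' (fun i _ => hterm i) ⟨Fin.last n, Finset.mem_univ _, sub_pos.2 hlt⟩
  rw [Finset.sum_sub_distrib, ← map_sum, ← map_sum, hsum, sub_self] at hpos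
  exact lt_irrefl _ hpos

theorem closedGraphOn_of_forall_le [TopologicalSpace V] (hC : IsClosed C) (P : Set ι)
    (F : ι → V → ℝ) (hF : ∀ p, Continuous (F p))
    (hR : ∀ a ∈ C, ∀ b ∈ C, R a b ↔ ∀ p ∈ P, F p b ≤ F p a) : ClosedGraphOn C R := by
  have : relGraph C R = (C ×ˢ C) ∩ ⋂ p ∈ P, {q | F p q.2 ≤ F p q.1} := by
    ext ⟨a, b⟩
    simp only [relGraph, mem_inter_iff, mem_prod, mem_iInter₂]
    constructor
    · rintro ⟨ha, hb, h⟩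
      exact ⟨⟨ha, hb⟩, (hR a ha b hb).1 h⟩
    · rintro ⟨⟨ha, hb⟩, h⟩
      exact ⟨ha, hb, (hR a ha b hb).2 h⟩
  change IsClosed (relGraph C R)
  rw [this]
  exact (hC.prod hC).inter <| isClosed_biInter fun p _ =>
    isClosed_le ((hF p).comp continuous_snd) ((hF p).comp continuous_fst)

end Representation

theorem Convex.exists_mem_forall_eq_zero {E : Type*} [AddCommGroup E] [Module ℝ E]
    [FiniteDimensional ℝ E] {P : Set E} (hP : Convex ℝ P) (hne : P.Nonempty) :
    ∃ p₀ ∈ P, ∀ φ : E →ₗ[ℝ] ℝ, (∀ p ∈ P, 0 ≤ φ p) → φ p₀ ≤ 0 → ∀ p ∈ P, φ p = 0 := by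
  classical
  obtain ⟨F, hFP, hspan⟩ :=
    (Submodule.fg_span_iff_fg_span_finset_subset (R := ℝ) P).1 (IsNoetherian.noetherian _)
  obtain ⟨p₁, hp₁⟩ := hne
  set G := insert p₁ F
  have hGP : ∀ q ∈ G, q ∈ P := by simpa [G] using ⟨hp₁, fun q hq => hFP hq⟩
  have hcard : (0 : ℝ) < G.card := Nat.cast_pos.2 (Finset.card_pos.2 (Finset.insert_nonempty _ _))
  refine ⟨∑ q ∈ G, (G.card : ℝ)⁻¹ • q, hP.sum_mem (fun _ _ => by positivity) ?_ hGP,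
    fun φ hφ h₀ p hp => ?_⟩
  · rw [Finset.sum_const, nsmul_eq_mul, mul_inv_cancel₀ hcard.ne']
  have hG : ∀ q ∈ G, φ q = 0 := by
    simp only [map_sum, map_smul, smul_eq_mul, ← Finset.mul_sum] at h₀
    refine (Finset.sum_eq_zero_iff_of_nonneg fun q hq => hφ q (hGP q hq)).1
      (le_antisymm ?_ (Finset.sum_nonneg fun q hq => hφ q (hGP q hq)))
    exact nonpos_of_mul_nonpos_right h₀ (inv_pos.2 hcard)
  have hpG : p ∈ Submodule.span ℝ (G : Set E) :=
    Submodule.span_mono (Finset.subset_insert _ _) (hspan ▸ Submodule.subset_span hp)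
  exact LinearMap.eqOn_span (g := 0) hG hpG

theorem exists_rel_iff_of_total {E V : Type*} [AddCommGroup E] [Module ℝ E]
    [FiniteDimensional ℝ E] [AddCommGroup V] [Module ℝ V] {C : Set V} {R : V → V → Prop}
    {P : Set E} (hP : Convex ℝ P) (hne : P.Nonempty) (B : E →ₗ[ℝ] V →ₗ[ℝ] ℝ)
    (hR : ∀ a ∈ C, ∀ b ∈ C, R a b ↔ ∀ p ∈ P, B p b ≤ B p a)
    (htot : ∀ a ∈ C, ∀ b ∈ C, R a b ∨ R b a) :
    ∃ p₀ ∈ P, ∀ a ∈ C, ∀ b ∈ C, R a b ↔ B p₀ b ≤ B p₀ a := by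
  obtain ⟨p₀, hp₀, hzero⟩ := hP.exists_mem_forall_eq_zero hne
  refine ⟨p₀, hp₀, fun a ha b hb => ⟨fun h => (hR a ha b hb).1 h p₀ hp₀, fun h => ?_⟩⟩
  refine (htot a ha b hb).elim id fun hba => (hR a ha b hb).2 fun p hp => ?_
  have hφ := hzero (B.flip (b - a)) (fun q hq => by
    simpa [sub_nonneg] using (hR b hb a ha).1 hba q hq) (by simpa using h) p hp
  rw [map_sub, LinearMap.sub_apply, LinearMap.flip_apply, LinearMap.flip_apply, sub_eq_zero] at hφ
  exact hφ.le

/-- A relation on a closed, mixture-closed set of AA acts satisfies extended mixture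
cancellation and has closed graph iff it has a constructive SEU representation over some
finite nonempty subjective state space `Fin (ns+1)` and outcome space `Fin (no+1)`, with
a single utility function and a nonempty closed set of probability distributions; if the
relation is moreover complete, the set of probabilities can be chosen to be a singleton. -/
theorem extMixCancel_closedGraph_iff_constructiveSEURep
    {S A : Type*} [Fintype S] [Fintype A] [Nonempty S] [Nonempty A]
    (C : Set (S → A → ℝ)) (R : (S → A → ℝ) → (S → A → ℝ) → Prop)
    (hAA : ∀ a ∈ C, IsAAAct a)
    (hclosedC : IsClosed C)
    (hmix : ∀ a ∈ C, ∀ b ∈ C, ∀ r : ℝ, 0 ≤ r → r ≤ 1 → r • a + (1 - r) • b ∈ C) :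
    ((ExtMixCancel C R ∧ ClosedGraphOn C R) ↔
      ∃ (ns no : ℕ) (h : Fin (ns + 1) → S) (g : Fin (ns + 1) × A → Fin (no + 1))
        (u : Fin (no + 1) → ℝ) (P : Set (Fin (ns + 1) → ℝ)),
        P.Nonempty ∧ IsClosed P ∧
        (∀ p ∈ P, (∀ s', 0 ≤ p s') ∧ (∑ s', p s' = 1)) ∧
        (∀ a ∈ C, ∀ b ∈ C,
          (R a b ↔ ∀ p ∈ P,
            ∑ s', p s' * ∑ c, a (h s') c * u (g (s', c)) ≥
            ∑ s', p s' * ∑ c, b (h s') c * u (g (s', c))))) ∧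
    ((ExtMixCancel C R ∧ ClosedGraphOn C R ∧ (∀ a ∈ C, ∀ b ∈ C, R a b ∨ R b a)) →
      ∃ (ns no : ℕ) (h : Fin (ns + 1) → S) (g : Fin (ns + 1) × A → Fin (no + 1))
        (u : Fin (no + 1) → ℝ) (p : Fin (ns + 1) → ℝ),
        (∀ s', 0 ≤ p s') ∧ (∑ s', p s' = 1) ∧
        (∀ a ∈ C, ∀ b ∈ C,
          (R a b ↔
            ∑ s', p s' * ∑ c, a (h s') c * u (g (s', c)) ≥
            ∑ s', p s' * ∑ c, b (h s') c * u (g (s', c))))) := by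
  classical
  have hC : Convex ℝ C := fun a ha b hb μ ν hμ hν hμν => by
    obtain rfl : ν = 1 - μ := by linarith
    exact hmix a ha b hb μ hμ (by linarith)
  obtain ⟨ns, ⟨e⟩⟩ : ∃ ns, Nonempty (Fin (ns + 1) ≃ S × A) :=
    ⟨_, ⟨(Fintype.equivFinOfCardEq (α := S × A) (Nat.sub_add_cancel Fintype.card_pos).symm).symm⟩⟩
  set h : Fin (ns + 1) → S := fun i => (e i).1
  set u : Fin 2 → ℝ := fun o => ((o : ℕ) : ℝ)
  set B := seuPairing h (indicatorOutcome e) u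
  have hP := priors_nonempty (e := e) (sum_actCoords_eq_zero_of_mem_relDiffs e hAA (R := R))
  have hrep (hE : ExtMixCancel C R) (hG : ClosedGraphOn C R) :
      ∀ a ∈ C, ∀ b ∈ C, R a b ↔ ∀ p ∈ priors e (relDiffs C R), B p b ≤ B p a := by
    intro a ha b hb
    simp only [B, h, u, seuPairing_indicatorOutcome]
    exact hE.rel_iff_forall_priors e hAA hC
      (isCompact_relDiffs (isCompact_of_forall_isAAAct hAA hclosedC) hG).isClosed ha hb
  refine ⟨⟨fun ⟨hE, hG⟩ => ?_, fun ⟨_, _, h', g', u', P, _, _, _, hR⟩ => ?_⟩,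
    fun ⟨hE, hG, htot⟩ => ?_⟩
  · exact ⟨ns, 1, h, indicatorOutcome e, u, _, hP, isClosed_priors, fun p hp => hp.1, hrep hE hG⟩
  · exact ⟨extMixCancel_of_forall_le P (fun p => (seuPairing h' g' u' p).toAddMonoidHom) hR,
      closedGraphOn_of_forall_le hclosedC P _
        (fun p => (seuPairing h' g' u' p).continuous_of_finiteDimensional) hR⟩
  · obtain ⟨p₀, hp₀, h₀⟩ := exists_rel_iff_of_total convex_priors hP B (hrep hE hG) htot
    exact ⟨ns, 1, h, indicatorOutcome e, u, p₀, hp₀.1.1, hp₀.1.2, h₀⟩
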